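/- arXiv:2407.19209 — 3 statements merged into one kernel-verified Lean document; each statement's English description precedes it below -/
import Mathlib

section
/- Let f : [−π/2, π/2] → ℝ be nonnegative and integrable, let a_t, ȧ_t : [−π/2, π/2] → ℂ^{M_t} and ȧ_r : [−π/2, π/2] → ℂ^{M_r} be continuous, let X ∈ ℂ^{M_t×L}, let M_r ≥ 1, and define the real numbers t₀ = ∫ f(θ)·‖ȧ_r(θ)‖²·‖X^H a_t(θ)‖² dθ, t₁ = t₀ + M_r·∫ f(θ)·‖X^H ȧ_t(θ)‖² dθ, t₃ = M_r·∫ f(θ)·‖X^H a_t(θ)‖² dθ, and the complex number t₂ = M_r·∫ f(θ)·a_t(θ)^H X X^H ȧ_t(θ) dθ. Let Λ ≥ 0 and c > 0 be reals and assume t₃ > 0 and Λ + c·t₀ > 0. Then the posterior Cramér–Rao bound satisfies (Λ + c·(t₁ − |t₂|²/t₃))⁻¹ ≤ (Λ + c·t₀)⁻¹; that is, PCRB_θ(X) is bounded above by the simplified bound [Λ + c·t₀]⁻¹ (Proposition 2). -/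
/-!
With `u θ = Xᴴ a_t(θ)` and `v θ = Xᴴ ȧ_t(θ)`, Cauchy–Schwarz in `L²(f dθ)` gives
`|t₂|² ≤ M_r² (∫ f ‖u‖²) (∫ f ‖v‖²) = t₃ (t₁ - t₀)`, so `t₁ - |t₂|²/t₃ ≥ t₀`
and the bound follows because `x ↦ (Λ + c x)⁻¹` is antitone where it is positive.
-/

open Matrix MeasureTheory

section WeightedCauchySchwarz

variable {α : Type*} [MeasurableSpace α] {μ : Measure α} {w : α → ℝ}

theorem sq_integral_weight_mul_le (hw : 0 ≤ᵐ[μ] w) {F G : α → ℝ}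
    (hF : Integrable (fun x => w x * F x ^ 2) μ) (hG : Integrable (fun x => w x * G x ^ 2) μ)
    (hFG : Integrable (fun x => w x * (F x * G x)) μ) :
    (∫ x, w x * (F x * G x) ∂μ) ^ 2 ≤ (∫ x, w x * F x ^ 2 ∂μ) * ∫ x, w x * G x ^ 2 ∂μ := by
  have hquad : ∀ r : ℝ, 0 ≤ (∫ x, w x * G x ^ 2 ∂μ) * (r * r)
      + 2 * (∫ x, w x * (F x * G x) ∂μ) * r + ∫ x, w x * F x ^ 2 ∂μ := by
    intro r
    have hsq : 0 ≤ ∫ x, w x * (r * G x + F x) ^ 2 ∂μ :=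
      integral_nonneg_of_ae (by filter_upwards [hw] with x hx using mul_nonneg hx (sq_nonneg _))
    have hGFG : Integrable (fun x => r * r * (w x * G x ^ 2) + 2 * r * (w x * (F x * G x))) μ :=
      (hG.const_mul _).add (hFG.const_mul _)
    have hexpand : (fun x => w x * (r * G x + F x) ^ 2)
        = fun x => r * r * (w x * G x ^ 2) + 2 * r * (w x * (F x * G x)) + w x * F x ^ 2 := by
      funext x; ring
    rw [hexpand, integral_add hGFG hF,
      integral_add (hG.const_mul _) (hFG.const_mul _), integral_const_mul,
      integral_const_mul] at hsq
    linarith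
  have := discrim_le_zero hquad
  rw [discrim] at this
  linarith

theorem sq_norm_integral_weight_mul_inner_le {𝕜 E : Type*} [RCLike 𝕜] [NormedAddCommGroup E]
    [InnerProductSpace 𝕜 E] (hw : 0 ≤ᵐ[μ] w) {u v : α → E}
    (hu : Integrable (fun x => w x * ‖u x‖ ^ 2) μ) (hv : Integrable (fun x => w x * ‖v x‖ ^ 2) μ)
    (huv : Integrable (fun x => w x * (‖u x‖ * ‖v x‖)) μ) :
    ‖∫ x, (w x : 𝕜) * inner 𝕜 (u x) (v x) ∂μ‖ ^ 2
      ≤ (∫ x, w x * ‖u x‖ ^ 2 ∂μ) * ∫ x, w x * ‖v x‖ ^ 2 ∂μ := by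
  have hpointwise : ∀ᵐ x ∂μ, ‖(w x : 𝕜) * inner 𝕜 (u x) (v x)‖ ≤ w x * (‖u x‖ * ‖v x‖) := by
    filter_upwards [hw] with x hx
    rw [norm_mul, RCLike.norm_ofReal, abs_of_nonneg hx]
    exact mul_le_mul_of_nonneg_left (norm_inner_le_norm _ _) hx
  calc _ ≤ (∫ x, w x * (‖u x‖ * ‖v x‖) ∂μ) ^ 2 :=
        pow_le_pow_left₀ (norm_nonneg _) (norm_integral_le_of_norm_le huv hpointwise) 2
    _ ≤ _ := sq_integral_weight_mul_le hw hu hv huv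

end WeightedCauchySchwarz

theorem sq_norm_intervalIntegral_weight_mul_dotProduct_le {𝕜 ι : Type*} [RCLike 𝕜] [Fintype ι]
    {a b : ℝ} (hab : a ≤ b) {w : ℝ → ℝ} (hw0 : ∀ θ ∈ Set.Icc a b, 0 ≤ w θ)
    (hwi : IntervalIntegrable w volume a b) {p q : ℝ → ι → 𝕜}
    (hp : Continuous p) (hq : Continuous q) :
    ‖∫ θ in a..b, (w θ : 𝕜) * ∑ i, (starRingEnd 𝕜) (p θ i) * q θ i‖ ^ 2
      ≤ (∫ θ in a..b, w θ * ∑ i, ‖p θ i‖ ^ 2) * ∫ θ in a..b, w θ * ∑ i, ‖q θ i‖ ^ 2 := by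
  let u : ℝ → EuclideanSpace 𝕜 ι := fun θ => WithLp.toLp 2 (p θ)
  let v : ℝ → EuclideanSpace 𝕜 ι := fun θ => WithLp.toLp 2 (q θ)
  have hu : Continuous u := (PiLp.continuous_toLp 2 _).comp hp
  have hv : Continuous v := (PiLp.continuous_toLp 2 _).comp hq
  have hw : 0 ≤ᵐ[volume.restrict (Set.Ioc a b)] w :=
    ae_restrict_of_forall_mem measurableSet_Ioc fun θ hθ => hw0 θ (Set.Ioc_subset_Icc_self hθ)
  have hint : ∀ g : ℝ → ℝ, Continuous g → IntegrableOn (fun θ => w θ * g θ) (Set.Ioc a b) :=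
    fun g hg => (hwi.mul_continuousOn hg.continuousOn).1
  have hCS := sq_norm_integral_weight_mul_inner_le (𝕜 := 𝕜) hw
    (hint _ (hu.norm.pow 2)) (hint _ (hv.norm.pow 2)) (hint _ (hu.norm.mul hv.norm))
  simpa only [u, v, EuclideanSpace.norm_sq_eq, EuclideanSpace.inner_toLp_toLp, dotProduct,
    Pi.star_apply, RCLike.star_def, mul_comm (q _ _), ← intervalIntegral.integral_of_le hab]
    using hCS

theorem pcrb_upper_bound_general
    (Mr Mt L : ℕ)
    (f : ℝ → ℝ) (at_ dat : ℝ → Fin Mt → ℂ)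
    (X : Matrix (Fin Mt) (Fin L) ℂ)
    (hf0 : ∀ θ ∈ Set.Icc (-(Real.pi / 2)) (Real.pi / 2), 0 ≤ f θ)
    (hfi : IntervalIntegrable f MeasureTheory.volume (-(Real.pi / 2)) (Real.pi / 2))
    (hcat : Continuous at_) (hcdat : Continuous dat)
    (t0 t1 t3 Λ c : ℝ) (t2 : ℂ)
    (ht1 : t1 = t0 + (Mr : ℝ) * ∫ θ in (-(Real.pi / 2))..(Real.pi / 2),
        f θ * ∑ l, ‖Xᴴ.mulVec (dat θ) l‖ ^ 2)
    (ht3 : t3 = (Mr : ℝ) * ∫ θ in (-(Real.pi / 2))..(Real.pi / 2),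
        f θ * ∑ l, ‖Xᴴ.mulVec (at_ θ) l‖ ^ 2)
    (ht2 : t2 = (Mr : ℂ) * ∫ θ in (-(Real.pi / 2))..(Real.pi / 2),
        ((f θ : ℂ) * ∑ l, (starRingEnd ℂ) (Xᴴ.mulVec (at_ θ) l) * Xᴴ.mulVec (dat θ) l))
    (hc : 0 < c) (ht3pos : 0 < t3) (hpos : 0 < Λ + c * t0) :
    (Λ + c * (t1 - ‖t2‖ ^ 2 / t3))⁻¹ ≤ (Λ + c * t0)⁻¹ := by
  have hab : -(Real.pi / 2) ≤ Real.pi / 2 := by linarith [Real.pi_pos]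
  have hCS := sq_norm_intervalIntegral_weight_mul_dotProduct_le hab hf0 hfi
    (p := fun θ => Xᴴ *ᵥ at_ θ) (q := fun θ => Xᴴ *ᵥ dat θ)
    (continuous_const.matrix_mulVec hcat) (continuous_const.matrix_mulVec hcdat)
  -- `RCLike.ofReal` and `Complex.ofReal` agree only up to unfolding, which `linarith` does not see
  simp only [RCLike.ofReal_eq_complex_ofReal] at hCS
  have hgap : 0 ≤ t1 - t0 := by
    rw [ht1, add_sub_cancel_left]
    refine mul_nonneg (Nat.cast_nonneg _) (intervalIntegral.integral_nonneg hab fun θ hθ => ?_)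
    exact mul_nonneg (hf0 θ hθ) (Finset.sum_nonneg fun l _ => sq_nonneg _)
  have ht2_sq_le : ‖t2‖ ^ 2 ≤ (t1 - t0) * t3 := by
    rw [ht2, ht3, ht1, norm_mul, Complex.norm_natCast]
    linarith [mul_le_mul_of_nonneg_left hCS (sq_nonneg (Mr : ℝ))]
  apply inv_anti₀ hpos
  gcongr
  linarith [div_le_of_le_mul₀ ht3pos.le hgap ht2_sq_le]

/-- Proposition 2: the posterior Cramér–Rao bound
`PCRB_θ(X) = (Λ + c (t₁ − |t₂|²/t₃))⁻¹` is bounded above by the simplified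
bound `(Λ + c t₀)⁻¹`. -/
theorem pcrb_upper_bound
    (Mr Mt L : ℕ) (hMr : 1 ≤ Mr)
    (f : ℝ → ℝ) (at_ dat : ℝ → Fin Mt → ℂ) (dar : ℝ → Fin Mr → ℂ)
    (X : Matrix (Fin Mt) (Fin L) ℂ)
    (hf0 : ∀ θ ∈ Set.Icc (-(Real.pi / 2)) (Real.pi / 2), 0 ≤ f θ)
    (hfi : IntervalIntegrable f MeasureTheory.volume (-(Real.pi / 2)) (Real.pi / 2))
    (hcat : Continuous at_) (hcdat : Continuous dat) (hcdar : Continuous dar)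
    (t0 t1 t3 Λ c : ℝ) (t2 : ℂ)
    (ht0 : t0 = ∫ θ in (-(Real.pi / 2))..(Real.pi / 2),
        f θ * (∑ i, ‖dar θ i‖ ^ 2) * ∑ l, ‖Xᴴ.mulVec (at_ θ) l‖ ^ 2)
    (ht1 : t1 = t0 + (Mr : ℝ) * ∫ θ in (-(Real.pi / 2))..(Real.pi / 2),
        f θ * ∑ l, ‖Xᴴ.mulVec (dat θ) l‖ ^ 2)
    (ht3 : t3 = (Mr : ℝ) * ∫ θ in (-(Real.pi / 2))..(Real.pi / 2),
        f θ * ∑ l, ‖Xᴴ.mulVec (at_ θ) l‖ ^ 2)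
    (ht2 : t2 = (Mr : ℂ) * ∫ θ in (-(Real.pi / 2))..(Real.pi / 2),
        ((f θ : ℂ) * ∑ l, (starRingEnd ℂ) (Xᴴ.mulVec (at_ θ) l) * Xᴴ.mulVec (dat θ) l))
    (hΛ : 0 ≤ Λ) (hc : 0 < c) (ht3pos : 0 < t3) (hpos : 0 < Λ + c * t0) :
    (Λ + c * (t1 - ‖t2‖ ^ 2 / t3))⁻¹ ≤ (Λ + c * t0)⁻¹ :=
  pcrb_upper_bound_general Mr Mt L f at_ dat X hf0 hfi hcat hcdat t0 t1 t3 Λ c t2 ht1 ht3 ht2 hc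
    ht3pos hpos
end

section
/- Let c > 0 and h ∈ ℂ^L with h ≠ 0. Define g* = h if ‖h‖² ≥ c, and g* = √c · h/‖h‖ otherwise. Then ‖g*‖² ≥ c, and for every g ∈ ℂ^L with ‖g‖² ≥ c one has ‖g* − h‖ ≤ ‖g − h‖; i.e., g* minimizes ‖g − h‖² over the exterior region {g : ‖g‖² ≥ c}. -/
/-- projection onto the exterior region `{g : ‖g‖² ≥ c}` in `ℂ^L`: with
`g* = h` if `‖h‖² ≥ c` and `g* = √c · h/‖h‖` otherwise, `g*` is feasible and
minimizes `‖g − h‖` over the region. -/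
theorem exterior_projection_closed_form
    (L : ℕ) (c : ℝ) (hc : 0 < c) (h : EuclideanSpace ℂ (Fin L)) (hh : h ≠ 0)
    (g0 : EuclideanSpace ℂ (Fin L))
    (hg0 : g0 = if c ≤ ‖h‖ ^ 2 then h else (Real.sqrt c / ‖h‖ : ℝ) • h) :
    c ≤ ‖g0‖ ^ 2 ∧
    ∀ g : EuclideanSpace ℂ (Fin L), c ≤ ‖g‖ ^ 2 → ‖g0 - h‖ ≤ ‖g - h‖ := by
  have hhn : 0 < ‖h‖ := norm_pos_iff.mpr hh
  by_cases hcase : c ≤ ‖h‖ ^ 2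
  · rw [hg0, if_pos hcase]
    refine ⟨hcase, fun g _ => ?_⟩
    simp only [sub_self, norm_zero]; exact norm_nonneg (g - h)
  · rw [hg0, if_neg hcase]
    push_neg at hcase
    have hsq : Real.sqrt c ≤ ‖h‖ → False := by
      intro hle
      have : c ≤ ‖h‖ ^ 2 := by
        nlinarith [Real.sq_sqrt hc.le, Real.sqrt_nonneg c]
      linarith
    have hlt : ‖h‖ < Real.sqrt c := lt_of_not_ge hsq
    have hnorm : ‖((Real.sqrt c / ‖h‖ : ℝ) • h : EuclideanSpace ℂ (Fin L))‖
        = Real.sqrt c := by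
      rw [norm_smul, Real.norm_eq_abs, abs_of_nonneg
        (div_nonneg (Real.sqrt_nonneg c) hhn.le)]
      field_simp
    constructor
    · rw [hnorm, Real.sq_sqrt hc.le]
    · intro g hg
      have hgge : Real.sqrt c ≤ ‖g‖ := by
        have := Real.sqrt_le_sqrt hg
        rwa [Real.sqrt_sq (norm_nonneg g)] at this
      have hdist : ‖((Real.sqrt c / ‖h‖ : ℝ) • h : EuclideanSpace ℂ (Fin L)) - h‖
          = Real.sqrt c - ‖h‖ := by
        have : ((Real.sqrt c / ‖h‖ : ℝ) • h : EuclideanSpace ℂ (Fin L)) - h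
            = ((Real.sqrt c / ‖h‖ - 1 : ℝ)) • h := by
          rw [sub_smul, one_smul]
        rw [this, norm_smul, Real.norm_eq_abs, abs_of_nonneg (by
          rw [sub_nonneg, le_div_iff₀ hhn, one_mul]; exact hlt.le)]
        field_simp
      rw [hdist]
      calc Real.sqrt c - ‖h‖ ≤ ‖g‖ - ‖h‖ := by linarith
        _ ≤ ‖g - h‖ := norm_sub_norm_le g h
end

section
/- Let Ξ₀ ∈ ℂ^{M×M}, ρ > 0, and let (X^t), (U^t), (D^t) be sequences in ℂ^{M×L} satisfying, for every t, the first-order stationarity condition ρ·D^{t+1} = −(Ξ₀ + Ξ₀^H)·X^{t+1} together with the dual update D^{t+1} = D^t + U^{t+1} − X^{t+1}. Then for every t: ‖U^{t+1} − X^{t+1}‖_F = ‖D^{t+1} − D^t‖_F ≤ (1/ρ)·‖Ξ₀ + Ξ₀^H‖_F·‖X^{t+1} − X^t‖_F. In particular, if ‖X^{t+1} − X^t‖_F → 0 then the primal residual ‖U^t − X^t‖_F → 0. -/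
open Matrix

attribute [local instance] Matrix.frobeniusNormedAddCommGroup Matrix.frobeniusNormedSpace

/-- Frobenius norm of a complex matrix. -/
noncomputable def frobNorm {m n : Type*} [Fintype m] [Fintype n] (A : Matrix m n ℂ) : ℝ :=
  Real.sqrt (∑ i, ∑ j, ‖A i j‖ ^ 2)

lemma frobNorm_eq_norm {m n : Type*} [Fintype m] [Fintype n] (A : Matrix m n ℂ) :
    frobNorm A = ‖A‖ := by
  rw [frobNorm, Matrix.frobenius_norm_def, Real.sqrt_eq_rpow]
  congr 1
  refine Finset.sum_congr rfl fun i _ => Finset.sum_congr rfl fun j _ => ?_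
  rw [← Real.rpow_natCast]
  norm_num

/-- under the ADMM first-order stationarity condition
`ρ D^t = −(Ξ₀ + Ξ₀ᴴ) X^t` and dual update `D^{t+1} = D^t + U^{t+1} − X^{t+1}`,
one has `‖U^{t+1} − X^{t+1}‖_F = ‖D^{t+1} − D^t‖_F ≤ (1/ρ)‖Ξ₀+Ξ₀ᴴ‖_F ‖X^{t+1}−X^t‖_F`;
in particular `‖X^{t+1} − X^t‖_F → 0` implies `‖U^t − X^t‖_F → 0`. -/
theorem admm_primal_residual_bound
    (M L : ℕ) (Ξ : Matrix (Fin M) (Fin M) ℂ) (ρ : ℝ) (hρ : 0 < ρ)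
    (X U D : ℕ → Matrix (Fin M) (Fin L) ℂ)
    (hstat : ∀ t, ρ • D t = -((Ξ + Ξᴴ) * X t))
    (hdual : ∀ t, D (t + 1) = D t + U (t + 1) - X (t + 1)) :
    (∀ t, frobNorm (U (t + 1) - X (t + 1)) = frobNorm (D (t + 1) - D t) ∧
      frobNorm (D (t + 1) - D t) ≤
        1 / ρ * frobNorm (Ξ + Ξᴴ) * frobNorm (X (t + 1) - X t)) ∧
    (Filter.Tendsto (fun t => frobNorm (X (t + 1) - X t)) Filter.atTop (nhds 0) →
      Filter.Tendsto (fun t => frobNorm (U t - X t)) Filter.atTop (nhds 0)) := by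
  have hUX : ∀ t, U (t + 1) - X (t + 1) = D (t + 1) - D t := by
    intro t
    have := hdual t
    rw [this]; abel
  have key : ∀ t, ρ • (D (t + 1) - D t) = -((Ξ + Ξᴴ) * (X (t + 1) - X t)) := by
    intro t
    rw [smul_sub, hstat (t + 1), hstat t, Matrix.mul_sub]
    abel
  have hbound : ∀ t, frobNorm (D (t + 1) - D t) ≤
      1 / ρ * frobNorm (Ξ + Ξᴴ) * frobNorm (X (t + 1) - X t) := by
    intro t
    simp only [frobNorm_eq_norm]
    have h1 : ρ * ‖D (t + 1) - D t‖ = ‖(Ξ + Ξᴴ) * (X (t + 1) - X t)‖ := by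
      have := congrArg norm (key t)
      rwa [norm_smul, Real.norm_eq_abs, abs_of_pos hρ, norm_neg] at this
    have h2 : ‖(Ξ + Ξᴴ) * (X (t + 1) - X t)‖ ≤ ‖Ξ + Ξᴴ‖ * ‖X (t + 1) - X t‖ :=
      Matrix.frobenius_norm_mul _ _
    rw [div_mul_eq_mul_div, one_mul, div_mul_eq_mul_div, le_div_iff₀ hρ, mul_comm]
    exact h1.le.trans h2
  refine ⟨fun t => ⟨by rw [hUX t], hbound t⟩, fun hX => ?_⟩
  rw [← Filter.tendsto_add_atTop_iff_nat 1]
  have hgoal : Filter.Tendsto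
      (fun t => 1 / ρ * frobNorm (Ξ + Ξᴴ) * frobNorm (X (t + 1) - X t))
      Filter.atTop (nhds 0) := by
    have := hX.const_mul (1 / ρ * frobNorm (Ξ + Ξᴴ))
    simpa using this
  refine squeeze_zero (fun t => ?_) (fun t => ?_) hgoal
  · rw [frobNorm_eq_norm]; exact norm_nonneg _
  · rw [hUX t]; exact hbound t
end
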